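/- Let A, A' be G-graded crossed products over a G-graded G-acted algebra 𝒞, and let M̃ be a G-graded (A,A')-bimodule over 𝒞 with identity component M = M̃_1. Then the wreath product M̃ ≀ S_n := M̃^{⊗n} ⊗ 𝒪S_n, with the action ((a_1⊗...⊗a_n)⊗σ)·((m̃_1⊗...⊗m̃_n)⊗τ)·((a'_1⊗...⊗a'_n)⊗π) = (a_1⊗...⊗a_n)·^σ(m̃_1⊗...⊗m̃_n)·^{στ}(a'_1⊗...⊗a'_n) ⊗ στπ, is a (G ≀ S_n)-graded (A ≀ S_n, A' ≀ S_n)-bimodule over 𝒞^{⊗n}, whose ((g_1,...,g_n),σ)-component is (M̃_{g_1}⊗...⊗M̃_{g_n}) ⊗ 𝒪σ. -/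

import Mathlib

open scoped TensorProduct

set_option synthInstance.maxHeartbeats 1000000
set_option maxHeartbeats 1000000

/-- `S_n` acting on `G^n` by permuting coordinates. -/
def permAut (G : Type*) [Group G] (n : ℕ) :
    Equiv.Perm (Fin n) →* MulAut (Fin n → G) where
  toFun σ :=
    { toFun := fun g i => g (σ⁻¹ i)
      invFun := fun g i => g (σ i)
      left_inv := fun g => by funext i; simp
      right_inv := fun g => by funext i; simp
      map_mul' := fun g h => rfl }
  map_one' := by ext g i; rfl
  map_mul' σ τ := by
    ext g i
    simp [MulAut.mul_apply, Equiv.Perm.mul_apply]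

/-- The wreath product `G ≀ S_n = G^n ⋊ S_n`. -/
abbrev Wr (G : Type*) [Group G] (n : ℕ) :=
  SemidirectProduct (Fin n → G) (Equiv.Perm (Fin n)) (permAut G n)

/-- The underlying `𝒪`-module `M^{⊗n} ⊗ 𝒪S_n` of a wreath product. -/
noncomputable abbrev WrMod (𝒪 M : Type*) [CommRing 𝒪] [AddCommGroup M]
    [Module 𝒪 M] (n : ℕ) :=
  (⨂[𝒪] _ : Fin n, M) ⊗[𝒪] MonoidAlgebra 𝒪 (Equiv.Perm (Fin n))

/-- the pure element `(m_1 ⊗ ... ⊗ m_n) ⊗ c·σ`. -/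
noncomputable def wrElt {𝒪 M : Type*} [CommRing 𝒪] [AddCommGroup M] [Module 𝒪 M]
    {n : ℕ} (m : Fin n → M) (σ : Equiv.Perm (Fin n)) (c : 𝒪) : WrMod 𝒪 M n :=
  (PiTensorProduct.tprod 𝒪 m) ⊗ₜ[𝒪] (MonoidAlgebra.single σ c)

/-- The `((g_1,…,g_n),σ)`-component `(M_{g_1} ⊗ ... ⊗ M_{g_n}) ⊗ 𝒪σ`. -/
noncomputable def wrComp {𝒪 M G : Type*} [CommRing 𝒪] [AddCommGroup M] [Module 𝒪 M]
    [Group G] {n : ℕ} (ℳ : G → Submodule 𝒪 M) (x : Wr G n) :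
    Submodule 𝒪 (WrMod 𝒪 M n) :=
  Submodule.span 𝒪
    {m | ∃ (a : Fin n → M) (c : 𝒪), (∀ i, a i ∈ ℳ (x.left i)) ∧ m = wrElt a x.right c}

/-- `mul` is the wreath product multiplication on `A^{⊗n} ⊗ 𝒪S_n`. -/
noncomputable def IsWreathMul {𝒪 A : Type*} [CommRing 𝒪] [Ring A] [Algebra 𝒪 A]
    {n : ℕ} (mul : WrMod 𝒪 A n → WrMod 𝒪 A n → WrMod 𝒪 A n) : Prop :=
  (∀ (a b : Fin n → A) (σ τ : Equiv.Perm (Fin n)) (c d : 𝒪),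
    mul (wrElt a σ c) (wrElt b τ d) =
      wrElt (fun i => a i * b (σ⁻¹ i)) (σ * τ) (c * d)) ∧
  (∀ x y z, mul (mul x y) z = mul x (mul y z)) ∧
  (∀ x, mul (wrElt (fun _ => (1 : A)) 1 1) x = x) ∧
  (∀ x, mul x (wrElt (fun _ => (1 : A)) 1 1) = x) ∧
  (∀ x y z, mul x (y + z) = mul x y + mul x z) ∧
  (∀ x y z, mul (x + y) z = mul x z + mul y z) ∧
  (∀ (s : 𝒪) x y, mul (s • x) y = s • mul x y) ∧
  (∀ (s : 𝒪) x y, mul x (s • y) = s • mul x y)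

/-- A family of submodules is an algebra grading. -/
def IsAlgGrading {𝒪 M ι : Type*} [CommRing 𝒪] [AddCommGroup M] [Module 𝒪 M]
    [Monoid ι] [DecidableEq ι] (mul : M → M → M) (one : M)
    (𝒜 : ι → Submodule 𝒪 M) : Prop :=
  DirectSum.IsInternal 𝒜 ∧ one ∈ 𝒜 1 ∧
    ∀ g h a b, a ∈ 𝒜 g → b ∈ 𝒜 h → mul a b ∈ 𝒜 (g * h)

/-- every homogeneous component contains an invertible element. -/
def IsCrossed {𝒪 M ι : Type*} [CommRing 𝒪] [AddCommGroup M] [Module 𝒪 M]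
    [Group ι] (mul : M → M → M) (one : M) (𝒜 : ι → Submodule 𝒪 M) : Prop :=
  ∀ g : ι, ∃ u ∈ 𝒜 g, ∃ v ∈ 𝒜 g⁻¹, mul u v = one ∧ mul v u = one

/-!
All the structure maps of `M̃ ≀ S_n` come from one construction: a bilinear pairing
`f : A × B → C` induces `wrAct f`, given on pure tensors by `(a ⊗ σ)(b ⊗ τ) = f(a, ᵟb) ⊗ στ`.
The multiplication of `A ≀ S_n` is `wrAct` of the multiplication of `A`, since both are
bilinear and agree on pure tensors. Associativity of the two actions and their commutation
are then instances of the single identity `wrAct g (wrAct f x y) z = wrAct k x (wrAct h y z)`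
for `g (f a b) d = k a (h b d)`, which is checked on pure tensors. The grading is internal
because the projections `M̃ → M̃_g` tensor together to projections onto the components
`(M̃_{g_1} ⊗ ⋯ ⊗ M̃_{g_n}) ⊗ 𝒪σ`, and writing `m = ∑_g m_g` in each factor expands a pure
tensor into homogeneous ones.
-/

noncomputable section WreathAction

open PiTensorProduct TensorProduct LinearMap

variable {𝒪 : Type*} [CommRing 𝒪] {n : ℕ}
  {A B C D E F M N : Type*} [AddCommGroup A] [Module 𝒪 A] [AddCommGroup B] [Module 𝒪 B]
  [AddCommGroup C] [Module 𝒪 C] [AddCommGroup D] [Module 𝒪 D] [AddCommGroup E] [Module 𝒪 E]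
  [AddCommGroup F] [Module 𝒪 F] [AddCommGroup M] [Module 𝒪 M] [AddCommGroup N] [Module 𝒪 N]

attribute [local ext high] TensorProduct.ext

theorem wrMod_hom_ext {f g : WrMod 𝒪 M n →ₗ[𝒪] N}
    (h : ∀ m σ, f (wrElt m σ 1) = g (wrElt m σ 1)) : f = g := by
  ext m σ
  exact h m σ

theorem wrMod_eq_top_of_wrElt_mem {S : Submodule 𝒪 (WrMod 𝒪 M n)}
    (h : ∀ m σ, wrElt m σ 1 ∈ S) : S = ⊤ := by
  have : S.mkQ = 0 := wrMod_hom_ext fun m σ => (Submodule.Quotient.mk_eq_zero S).mpr (h m σ)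
  rw [← Submodule.ker_mkQ S, this, LinearMap.ker_zero]

def wrActSingle (f : A →ₗ[𝒪] B →ₗ[𝒪] C) (σ : Equiv.Perm (Fin n)) :
    (⨂[𝒪] _ : Fin n, A) →ₗ[𝒪] WrMod 𝒪 B n →ₗ[𝒪] WrMod 𝒪 C n :=
  (mapBilinear (RingHom.id 𝒪) _ _ _ _).flip (mulLeft 𝒪 (MonoidAlgebra.single σ 1)) ∘ₗ
    (PiTensorProduct.map₂ fun _ => f).compl₂ (reindex 𝒪 (fun _ => B) σ).toLinearMap

theorem wrActSingle_tprod_wrElt (f : A →ₗ[𝒪] B →ₗ[𝒪] C) (σ τ : Equiv.Perm (Fin n))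
    (a : Fin n → A) (b : Fin n → B) (e : 𝒪) :
    wrActSingle f σ (tprod 𝒪 a) (wrElt b τ e) =
      wrElt (fun i => f (a i) (b (σ⁻¹ i))) (σ * τ) e := by
  simp [wrActSingle, wrElt, reindex_tprod, map₂_tprod_tprod]

def wrAct (f : A →ₗ[𝒪] B →ₗ[𝒪] C) : WrMod 𝒪 A n →ₗ[𝒪] WrMod 𝒪 B n →ₗ[𝒪] WrMod 𝒪 C n :=
  TensorProduct.lift <| LinearMap.flip <|
    Finsupp.linearCombination 𝒪 (wrActSingle f) ∘ₗ (MonoidAlgebra.coeffLinearEquiv 𝒪).toLinearMap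

theorem wrAct_wrElt (f : A →ₗ[𝒪] B →ₗ[𝒪] C) (a : Fin n → A) (b : Fin n → B)
    (σ τ : Equiv.Perm (Fin n)) (c e : 𝒪) :
    wrAct f (wrElt a σ c) (wrElt b τ e) =
      wrElt (fun i => f (a i) (b (σ⁻¹ i))) (σ * τ) (c * e) := by
  have h := wrActSingle_tprod_wrElt f σ τ a b e
  simp only [wrElt] at h
  simp only [wrAct, wrElt, lift.tmul, flip_apply, coe_comp, LinearEquiv.coe_coe,
    Function.comp_apply, MonoidAlgebra.coeffLinearEquiv_apply, MonoidAlgebra.coeff_single,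
    Finsupp.linearCombination_single, LinearMap.smul_apply]
  rw [h, ← TensorProduct.tmul_smul, MonoidAlgebra.smul_single']

theorem wrAct_wrAct {f : A →ₗ[𝒪] B →ₗ[𝒪] C} {g : C →ₗ[𝒪] D →ₗ[𝒪] E}
    {h : B →ₗ[𝒪] D →ₗ[𝒪] F} {k : A →ₗ[𝒪] F →ₗ[𝒪] E}
    (hfg : ∀ a b d, g (f a b) d = k a (h b d))
    (x : WrMod 𝒪 A n) (y : WrMod 𝒪 B n) (z : WrMod 𝒪 D n) :
    wrAct g (wrAct f x y) z = wrAct k x (wrAct h y z) := by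
  have : (wrAct (n := n) f).compr₂ (wrAct g) = (llcomp 𝒪 _ _ _).compl₁₂ (wrAct k) (wrAct h) :=
    wrMod_hom_ext fun a σ => wrMod_hom_ext fun b τ => wrMod_hom_ext fun d π => by
      simp [wrAct_wrElt, hfg, mul_assoc]
  exact congr($this x y z)

theorem wrAct_wrElt_one_left {f : A →ₗ[𝒪] B →ₗ[𝒪] B} {e : A} (he : f e = LinearMap.id) :
    wrAct f (wrElt (n := n) (fun _ => e) 1 1) = LinearMap.id :=
  wrMod_hom_ext fun m σ => by simp [wrAct_wrElt, he]

theorem wrAct_wrElt_one_right {f : B →ₗ[𝒪] A →ₗ[𝒪] B} {e : A} (he : f.flip e = LinearMap.id) :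
    (wrAct f).flip (wrElt (n := n) (fun _ => e) 1 1) = LinearMap.id :=
  wrMod_hom_ext fun m σ => by
    simpa [wrAct_wrElt] using congr(wrElt (fun i => $he (m i)) σ 1)

theorem IsWreathMul.eq_wrAct {R : Type*} [Ring R] [Algebra 𝒪 R]
    {mul : WrMod 𝒪 R n → WrMod 𝒪 R n → WrMod 𝒪 R n} (hmul : IsWreathMul mul)
    (x y : WrMod 𝒪 R n) : mul x y = wrAct (LinearMap.mul 𝒪 R) x y := by
  obtain ⟨hpure, -, -, -, hadd_right, hadd_left, hsmul_left, hsmul_right⟩ := hmul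
  have : LinearMap.mk₂ 𝒪 mul hadd_left hsmul_left hadd_right hsmul_right =
      wrAct (LinearMap.mul 𝒪 R) :=
    wrMod_hom_ext fun a σ => wrMod_hom_ext fun b τ => by simp [hpure, wrAct_wrElt]
  exact congr($this x y)

section Grading

variable {G : Type*} [Group G]

theorem wrAct_mem_wrComp {𝒜 : G → Submodule 𝒪 A} {ℬ : G → Submodule 𝒪 B}
    {𝒞 : G → Submodule 𝒪 C} {f : A →ₗ[𝒪] B →ₗ[𝒪] C}
    (hf : ∀ g h, ∀ a ∈ 𝒜 g, ∀ b ∈ ℬ h, f a b ∈ 𝒞 (g * h)) {x y : Wr G n}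
    {u : WrMod 𝒪 A n} {v : WrMod 𝒪 B n} (hu : u ∈ wrComp 𝒜 x) (hv : v ∈ wrComp ℬ y) :
    wrAct f u v ∈ wrComp 𝒞 (x * y) := by
  have : Submodule.map₂ (wrAct f) (wrComp 𝒜 x) (wrComp ℬ y) ≤ wrComp 𝒞 (x * y) := by
    rw [wrComp, wrComp, Submodule.map₂_span_span, Submodule.span_le]
    rintro _ ⟨_, ⟨a, c, ha, rfl⟩, _, ⟨b, e, hb, rfl⟩, rfl⟩
    dsimp only
    rw [wrAct_wrElt]
    exact Submodule.subset_span ⟨_, c * e, fun i => hf _ _ _ (ha i) _ (hb _), rfl⟩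
  exact this (Submodule.apply_mem_map₂ _ hu hv)

theorem wrAct_wrElt_one_comm {ℳ : G → Submodule 𝒪 M} {f : A →ₗ[𝒪] M →ₗ[𝒪] M}
    {g : M →ₗ[𝒪] B →ₗ[𝒪] M} {x : Wr G n} {a : Fin n → A} {b : Fin n → B}
    (hab : ∀ i, ∀ m ∈ ℳ (x.left i), g m (b (x.right⁻¹ i)) = f (a i) m)
    {m : WrMod 𝒪 M n} (hm : m ∈ wrComp ℳ x) :
    wrAct g m (wrElt b 1 1) = wrAct f (wrElt a 1 1) m := by
  have : wrComp ℳ x ≤ eqLocus ((wrAct g).flip (wrElt b 1 1)) (wrAct f (wrElt a 1 1)) := by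
    rw [wrComp, Submodule.span_le]
    rintro _ ⟨m, c, hm, rfl⟩
    rw [SetLike.mem_coe, mem_eqLocus, flip_apply, wrAct_wrElt, wrAct_wrElt]
    simp only [mul_one, one_mul, inv_one, Equiv.Perm.one_apply]
    congr 1
    exact funext fun i => hab i _ (hm i)
  exact this hm

end Grading

theorem iSupIndep_of_projections {ι R V : Type*} [Ring R] [AddCommGroup V] [Module R V]
    {N : ι → Submodule R V} (P : ι → V →ₗ[R] V) (hP_self : ∀ i, ∀ v ∈ N i, P i v = v)
    (hP_ne : ∀ i j, j ≠ i → ∀ v ∈ N j, P i v = 0) : iSupIndep N := by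
  intro i
  have hker : ⨆ (j) (_ : j ≠ i), N j ≤ ker (P i) :=
    iSup₂_le fun j hj v hv => hP_ne i j hj v hv
  refine Submodule.disjoint_def.mpr fun v hv hv' => ?_
  rw [← hP_self i v hv]
  exact hker hv'

section Decomposition

variable {G : Type*} [DecidableEq G] (ℳ : G → Submodule 𝒪 M) [DirectSum.Decomposition ℳ]

def gradedProj (g : G) : M →ₗ[𝒪] M :=
  (ℳ g).subtype ∘ₗ DirectSum.component 𝒪 G (ℳ ·) g ∘ₗ
    (DirectSum.decomposeLinearEquiv ℳ).toLinearMap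

theorem gradedProj_apply (g : G) (m : M) :
    gradedProj ℳ g m = DirectSum.decompose ℳ m g := rfl

theorem sum_gradedProj [Fintype G] (m : M) : ∑ g, gradedProj ℳ g m = m := by
  conv_rhs => rw [← (DirectSum.decompose ℳ).symm_apply_apply m,
    ← DirectSum.sum_univ_of (DirectSum.decompose ℳ m)]
  simp only [gradedProj_apply, DirectSum.decompose_symm_sum, DirectSum.decompose_symm_of]

variable [Group G]

def wrCompProj (x : Wr G n) : WrMod 𝒪 M n →ₗ[𝒪] WrMod 𝒪 M n :=
  TensorProduct.map (PiTensorProduct.map fun i => gradedProj ℳ (x.left i))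
    (MonoidAlgebra.lsingle x.right ∘ₗ Finsupp.lapply x.right ∘ₗ
      (MonoidAlgebra.coeffLinearEquiv 𝒪).toLinearMap)

theorem wrCompProj_wrElt (x : Wr G n) (m : Fin n → M) (τ : Equiv.Perm (Fin n)) (c : 𝒪) :
    wrCompProj ℳ x (wrElt m τ c) =
      if τ = x.right then wrElt (fun i => gradedProj ℳ (x.left i) (m i)) τ c else 0 := by
  split_ifs with h
  · subst h
    simp [wrCompProj, wrElt]
  · simp [wrCompProj, wrElt, h]

theorem wrCompProj_of_mem {x : Wr G n} {u : WrMod 𝒪 M n} (hu : u ∈ wrComp ℳ x) :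
    wrCompProj ℳ x u = u := by
  have : wrComp ℳ x ≤ eqLocus (wrCompProj ℳ x) LinearMap.id := by
    rw [wrComp, Submodule.span_le]
    rintro _ ⟨m, c, hm, rfl⟩
    rw [SetLike.mem_coe, mem_eqLocus, wrCompProj_wrElt, if_pos rfl, id_apply]
    congr 1
    exact funext fun i => DirectSum.decompose_of_mem_same ℳ (hm i)
  exact this hu

theorem wrCompProj_of_mem_of_ne {x y : Wr G n} (hyx : y ≠ x) {u : WrMod 𝒪 M n}
    (hu : u ∈ wrComp ℳ y) : wrCompProj ℳ x u = 0 := by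
  have : wrComp ℳ y ≤ ker (wrCompProj ℳ x) := by
    rw [wrComp, Submodule.span_le]
    rintro _ ⟨m, c, hm, rfl⟩
    rw [SetLike.mem_coe, mem_ker, wrCompProj_wrElt]
    split_ifs with hright
    · obtain ⟨i, hi⟩ := Function.ne_iff.mp fun hleft => hyx (SemidirectProduct.ext hleft hright)
      have hzero : gradedProj ℳ (x.left i) (m i) = 0 := DirectSum.decompose_of_mem_ne ℳ (hm i) hi
      rw [wrElt, MultilinearMap.map_coord_zero _ i hzero, zero_tmul]
    · rfl
  exact this hu

theorem wrElt_mem_iSup_wrComp [Fintype G] (m : Fin n → M) (σ : Equiv.Perm (Fin n)) :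
    wrElt m σ 1 ∈ ⨆ x, wrComp ℳ x := by
  have hsum : wrElt m σ (1 : 𝒪) =
      ∑ γ : Fin n → G, wrElt (fun i => gradedProj ℳ (γ i) (m i)) σ 1 := by
    simp only [wrElt, ← sum_tmul]
    congr 1
    conv_lhs => rw [← funext fun i => sum_gradedProj ℳ (m i)]
    exact MultilinearMap.map_sum _ _
  rw [hsum]
  refine Submodule.sum_mem _ fun γ _ => Submodule.mem_iSup_of_mem (⟨γ, σ⟩ : Wr G n) ?_
  exact Submodule.subset_span ⟨_, 1, fun i => (DirectSum.decompose ℳ (m i) (γ i)).2, rfl⟩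

end Decomposition

theorem wrComp_isInternal {G : Type*} [Group G] [Finite G] [DecidableEq G]
    [DecidableEq (Wr G n)] {ℳ : G → Submodule 𝒪 M} (hℳ : DirectSum.IsInternal ℳ) :
    DirectSum.IsInternal (wrComp (n := n) ℳ) := by
  let := hℳ.chooseDecomposition
  have := Fintype.ofFinite G
  refine DirectSum.isInternal_submodule_of_iSupIndep_of_iSup_eq_top
    (iSupIndep_of_projections (wrCompProj ℳ) (fun x _ => wrCompProj_of_mem ℳ)
      fun x y hyx _ => wrCompProj_of_mem_of_ne ℳ hyx) ?_
  exact wrMod_eq_top_of_wrElt_mem (wrElt_mem_iSup_wrComp ℳ)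

end WreathAction

theorem wreath_bimodule_general (𝒪 : Type) [CommRing 𝒪]
    (G : Type) [Group G] [Finite G] [DecidableEq G]
    (n : ℕ) [DecidableEq (Wr G n)]
    -- the `G`-graded `G`-acted algebra `𝒞`
    (𝒞 : Type) [Ring 𝒞] [Algebra 𝒪 𝒞]
    (φC : G →* (𝒞 ≃ₐ[𝒪] 𝒞))
    -- `A` and `A'`, `G`-graded crossed products over `𝒞` with structure maps `ζ`, `ζ'`
    (A A' : Type) [Ring A] [Ring A'] [Algebra 𝒪 A] [Algebra 𝒪 A']
    (𝒜 : G → Submodule 𝒪 A) (𝒜' : G → Submodule 𝒪 A')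
    (ζ : 𝒞 →ₐ[𝒪] A) (ζ' : 𝒞 →ₐ[𝒪] A')
    -- the `G`-graded `(A,A')`-bimodule `M̃` over `𝒞`
    (M : Type) [AddCommGroup M] [Module 𝒪 M]
    (sl : A →ₗ[𝒪] M →ₗ[𝒪] M) (sr : A' →ₗ[𝒪] M →ₗ[𝒪] M)
    (hsl1 : sl 1 = LinearMap.id) (hslm : ∀ a b : A, sl (a * b) = sl a ∘ₗ sl b)
    (hsr1 : sr 1 = LinearMap.id) (hsrm : ∀ a b : A', sr (a * b) = sr b ∘ₗ sr a)
    (hcomm : ∀ (a : A) (a' : A'), sl a ∘ₗ sr a' = sr a' ∘ₗ sl a)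
    (ℳ : G → Submodule 𝒪 M) (hint : DirectSum.IsInternal ℳ)
    (hgrl : ∀ (g x : G), ∀ a ∈ 𝒜 g, ∀ m ∈ ℳ x, sl a m ∈ ℳ (g * x))
    (hgrr : ∀ (x h : G), ∀ a ∈ 𝒜' h, ∀ m ∈ ℳ x, sr a m ∈ ℳ (x * h))
    (hoverC : ∀ (g : G), ∀ m ∈ ℳ g, ∀ c : 𝒞, sr (ζ' c) m = sl (ζ (φC g c)) m)
    -- the wreath product algebras `A ≀ S_n` and `A' ≀ S_n`
    (mulW : WrMod 𝒪 A n → WrMod 𝒪 A n → WrMod 𝒪 A n) (hW : IsWreathMul mulW)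
    (mulW' : WrMod 𝒪 A' n → WrMod 𝒪 A' n → WrMod 𝒪 A' n) (hW' : IsWreathMul mulW') :
    -- conclusion: `M̃ ≀ S_n` is a `(G ≀ S_n)`-graded bimodule over `𝒞^{⊗n}`
    ∃ (SL : WrMod 𝒪 A n → WrMod 𝒪 M n → WrMod 𝒪 M n)
      (SR : WrMod 𝒪 M n → WrMod 𝒪 A' n → WrMod 𝒪 M n),
      -- the defining formulas on pure elements
      (∀ (a : Fin n → A) (m : Fin n → M) (σ τ : Equiv.Perm (Fin n)) (c e : 𝒪),
        SL (wrElt a σ c) (wrElt m τ e) =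
          wrElt (fun i => sl (a i) (m (σ⁻¹ i))) (σ * τ) (c * e)) ∧
      (∀ (m : Fin n → M) (a' : Fin n → A') (τ π : Equiv.Perm (Fin n)) (e f : 𝒪),
        SR (wrElt m τ e) (wrElt a' π f) =
          wrElt (fun i => sr (a' (τ⁻¹ i)) (m i)) (τ * π) (e * f)) ∧
      -- `M̃ ≀ S_n` is an `(A ≀ S_n, A' ≀ S_n)`-bimodule
      (∀ m, SL (wrElt (fun _ => (1 : A)) 1 1) m = m) ∧
      (∀ x y m, SL (mulW x y) m = SL x (SL y m)) ∧
      (∀ m, SR m (wrElt (fun _ => (1 : A')) 1 1) = m) ∧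
      (∀ m x y, SR m (mulW' x y) = SR (SR m x) y) ∧
      (∀ x m y, SR (SL x m) y = SL x (SR m y)) ∧
      (∀ x m m', SL x (m + m') = SL x m + SL x m') ∧
      (∀ x y m, SL (x + y) m = SL x m + SL y m) ∧
      (∀ m m' y, SR (m + m') y = SR m y + SR m' y) ∧
      (∀ m x y, SR m (x + y) = SR m x + SR m y) ∧
      (∀ (s : 𝒪) x m, SL (s • x) m = s • SL x m) ∧
      (∀ (s : 𝒪) x m, SL x (s • m) = s • SL x m) ∧
      (∀ (s : 𝒪) m y, SR (s • m) y = s • SR m y) ∧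
      (∀ (s : 𝒪) m y, SR m (s • y) = s • SR m y) ∧
      -- the `(G ≀ S_n)`-grading
      DirectSum.IsInternal (fun x : Wr G n => wrComp ℳ x) ∧
      (∀ (x y : Wr G n), ∀ u ∈ wrComp 𝒜 x, ∀ m ∈ wrComp ℳ y,
        SL u m ∈ wrComp ℳ (x * y)) ∧
      (∀ (y x : Wr G n), ∀ m ∈ wrComp ℳ y, ∀ u ∈ wrComp 𝒜' x,
        SR m u ∈ wrComp ℳ (y * x)) ∧
      -- `M̃ ≀ S_n` is a bimodule over `𝒞^{⊗n}`
      (∀ (x : Wr G n), ∀ m ∈ wrComp ℳ x, ∀ c : Fin n → 𝒞,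
        SR m (wrElt (fun i => ζ' (c i)) 1 1) =
          SL (wrElt (fun i => ζ (φC (x.left i) (c (x.right⁻¹ i)))) 1 1) m) := by
  have hmulW := hW.eq_wrAct
  have hmulW' := hW'.eq_wrAct
  refine ⟨fun x m => wrAct sl x m, fun m y => wrAct sr.flip m y,
    wrAct_wrElt sl, wrAct_wrElt sr.flip,
    fun m => congr($(wrAct_wrElt_one_left hsl1) m), fun x y m => ?_,
    fun m => congr($(wrAct_wrElt_one_right (f := sr.flip) hsr1) m),
    fun m x y => ?_, fun x m y => ?_,
    fun x => map_add (wrAct sl x), fun x y m => congr($(map_add (wrAct sl) x y) m),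
    fun m m' y => congr($(map_add (wrAct sr.flip) m m') y), fun m => map_add (wrAct sr.flip m),
    fun s x m => congr($(map_smul (wrAct sl) s x) m), fun s x => map_smul (wrAct sl x) s,
    fun s m y => congr($(map_smul (wrAct sr.flip) s m) y), fun s m => map_smul (wrAct sr.flip m) s,
    wrComp_isInternal hint,
    fun x y u hu m hm => wrAct_mem_wrComp hgrl hu hm,
    fun y x m hm u hu => wrAct_mem_wrComp (fun x h m hm a ha => hgrr x h a ha m hm) hm hu,
    fun x m hm c => wrAct_wrElt_one_comm (fun i m hm => hoverC _ m hm _) hm⟩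
  · rw [hmulW]
    exact wrAct_wrAct (f := LinearMap.mul 𝒪 A) (g := sl) (h := sl) (k := sl)
      (fun a b m => congr($(hslm a b) m)) x y m
  · rw [hmulW']
    exact (wrAct_wrAct (fun m a b => by simp [hsrm]) m x y).symm
  · exact wrAct_wrAct (fun a m b => congr($(hcomm a b) m).symm) x m y

/-- if `M̃` is a `G`-graded `(A,A')`-bimodule over `𝒞`, then
`M̃ ≀ S_n = M̃^{⊗n} ⊗ 𝒪S_n` is a `(G ≀ S_n)`-graded `(A ≀ S_n, A' ≀ S_n)`-bimodule
over `𝒞^{⊗n}`, with `((g_1,…,g_n),σ)`-component `(M̃_{g_1}⊗…⊗M̃_{g_n}) ⊗ 𝒪σ`. -/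
theorem wreath_bimodule (𝒪 : Type) [CommRing 𝒪]
    (G : Type) [Group G] [Finite G] [DecidableEq G]
    (n : ℕ) (hn : 0 < n) [DecidableEq (Wr G n)]
    -- the `G`-graded `G`-acted algebra `𝒞`
    (𝒞 : Type) [Ring 𝒞] [Algebra 𝒪 𝒞]
    (𝒢 : G → Submodule 𝒪 𝒞) (φC : G →* (𝒞 ≃ₐ[𝒪] 𝒞))
    (h𝒞 : IsAlgGrading (fun a b : 𝒞 => a * b) 1 𝒢)
    (h𝒞act : ∀ (g h : G), ∀ c ∈ 𝒢 h, φC g c ∈ 𝒢 (g * h * g⁻¹))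
    -- `A` and `A'`, `G`-graded crossed products over `𝒞` with structure maps `ζ`, `ζ'`
    (A A' : Type) [Ring A] [Ring A'] [Algebra 𝒪 A] [Algebra 𝒪 A']
    (𝒜 : G → Submodule 𝒪 A) (𝒜' : G → Submodule 𝒪 A')
    (hA : IsAlgGrading (fun a b : A => a * b) 1 𝒜)
    (hA' : IsAlgGrading (fun a b : A' => a * b) 1 𝒜')
    (hcA : IsCrossed (fun a b : A => a * b) 1 𝒜)
    (hcA' : IsCrossed (fun a b : A' => a * b) 1 𝒜')
    (ζ : 𝒞 →ₐ[𝒪] A) (ζ' : 𝒞 →ₐ[𝒪] A')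
    (hζcent : ∀ c : 𝒞, ∀ b ∈ 𝒜 1, ζ c * b = b * ζ c)
    (hζ'cent : ∀ c : 𝒞, ∀ b ∈ 𝒜' 1, ζ' c * b = b * ζ' c)
    (hζgr : ∀ (h : G), ∀ c ∈ 𝒢 h, ζ c ∈ 𝒜 h)
    (hζ'gr : ∀ (h : G), ∀ c ∈ 𝒢 h, ζ' c ∈ 𝒜' h)
    (hζeq : ∀ (g : G) (c : 𝒞) (u v : A), u ∈ 𝒜 g → v ∈ 𝒜 g⁻¹ →
      u * v = 1 → v * u = 1 → u * ζ c * v = ζ (φC g c))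
    (hζ'eq : ∀ (g : G) (c : 𝒞) (u v : A'), u ∈ 𝒜' g → v ∈ 𝒜' g⁻¹ →
      u * v = 1 → v * u = 1 → u * ζ' c * v = ζ' (φC g c))
    -- the `G`-graded `(A,A')`-bimodule `M̃` over `𝒞`
    (M : Type) [AddCommGroup M] [Module 𝒪 M]
    (sl : A →ₗ[𝒪] M →ₗ[𝒪] M) (sr : A' →ₗ[𝒪] M →ₗ[𝒪] M)
    (hsl1 : sl 1 = LinearMap.id) (hslm : ∀ a b : A, sl (a * b) = sl a ∘ₗ sl b)
    (hsr1 : sr 1 = LinearMap.id) (hsrm : ∀ a b : A', sr (a * b) = sr b ∘ₗ sr a)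
    (hcomm : ∀ (a : A) (a' : A'), sl a ∘ₗ sr a' = sr a' ∘ₗ sl a)
    (ℳ : G → Submodule 𝒪 M) (hint : DirectSum.IsInternal ℳ)
    (hgrl : ∀ (g x : G), ∀ a ∈ 𝒜 g, ∀ m ∈ ℳ x, sl a m ∈ ℳ (g * x))
    (hgrr : ∀ (x h : G), ∀ a ∈ 𝒜' h, ∀ m ∈ ℳ x, sr a m ∈ ℳ (x * h))
    (hoverC : ∀ (g : G), ∀ m ∈ ℳ g, ∀ c : 𝒞, sr (ζ' c) m = sl (ζ (φC g c)) m)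
    -- the wreath product algebras `A ≀ S_n` and `A' ≀ S_n`
    (mulW : WrMod 𝒪 A n → WrMod 𝒪 A n → WrMod 𝒪 A n) (hW : IsWreathMul mulW)
    (mulW' : WrMod 𝒪 A' n → WrMod 𝒪 A' n → WrMod 𝒪 A' n) (hW' : IsWreathMul mulW') :
    -- conclusion: `M̃ ≀ S_n` is a `(G ≀ S_n)`-graded bimodule over `𝒞^{⊗n}`
    ∃ (SL : WrMod 𝒪 A n → WrMod 𝒪 M n → WrMod 𝒪 M n)
      (SR : WrMod 𝒪 M n → WrMod 𝒪 A' n → WrMod 𝒪 M n),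
      -- the defining formulas on pure elements
      (∀ (a : Fin n → A) (m : Fin n → M) (σ τ : Equiv.Perm (Fin n)) (c e : 𝒪),
        SL (wrElt a σ c) (wrElt m τ e) =
          wrElt (fun i => sl (a i) (m (σ⁻¹ i))) (σ * τ) (c * e)) ∧
      (∀ (m : Fin n → M) (a' : Fin n → A') (τ π : Equiv.Perm (Fin n)) (e f : 𝒪),
        SR (wrElt m τ e) (wrElt a' π f) =
          wrElt (fun i => sr (a' (τ⁻¹ i)) (m i)) (τ * π) (e * f)) ∧
      -- `M̃ ≀ S_n` is an `(A ≀ S_n, A' ≀ S_n)`-bimodule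
      (∀ m, SL (wrElt (fun _ => (1 : A)) 1 1) m = m) ∧
      (∀ x y m, SL (mulW x y) m = SL x (SL y m)) ∧
      (∀ m, SR m (wrElt (fun _ => (1 : A')) 1 1) = m) ∧
      (∀ m x y, SR m (mulW' x y) = SR (SR m x) y) ∧
      (∀ x m y, SR (SL x m) y = SL x (SR m y)) ∧
      (∀ x m m', SL x (m + m') = SL x m + SL x m') ∧
      (∀ x y m, SL (x + y) m = SL x m + SL y m) ∧
      (∀ m m' y, SR (m + m') y = SR m y + SR m' y) ∧
      (∀ m x y, SR m (x + y) = SR m x + SR m y) ∧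
      (∀ (s : 𝒪) x m, SL (s • x) m = s • SL x m) ∧
      (∀ (s : 𝒪) x m, SL x (s • m) = s • SL x m) ∧
      (∀ (s : 𝒪) m y, SR (s • m) y = s • SR m y) ∧
      (∀ (s : 𝒪) m y, SR m (s • y) = s • SR m y) ∧
      -- the `(G ≀ S_n)`-grading
      DirectSum.IsInternal (fun x : Wr G n => wrComp ℳ x) ∧
      (∀ (x y : Wr G n), ∀ u ∈ wrComp 𝒜 x, ∀ m ∈ wrComp ℳ y,
        SL u m ∈ wrComp ℳ (x * y)) ∧
      (∀ (y x : Wr G n), ∀ m ∈ wrComp ℳ y, ∀ u ∈ wrComp 𝒜' x,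
        SR m u ∈ wrComp ℳ (y * x)) ∧
      -- `M̃ ≀ S_n` is a bimodule over `𝒞^{⊗n}`
      (∀ (x : Wr G n), ∀ m ∈ wrComp ℳ x, ∀ c : Fin n → 𝒞,
        SR m (wrElt (fun i => ζ' (c i)) 1 1) =
          SL (wrElt (fun i => ζ (φC (x.left i) (c (x.right⁻¹ i)))) 1 1) m) :=
  wreath_bimodule_general 𝒪 G n 𝒞 φC A A' 𝒜 𝒜' ζ ζ' M sl sr hsl1 hslm hsr1 hsrm hcomm ℳ hint hgrl
    hgrr hoverC mulW hW mulW' hW'
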